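/- Fix Seifert data and the associated star-shaped plumbing lattice. Then Z_K ≥ s_{[Z_K]} componentwise, where s_{[Z_K]} is the unique minimal element of (Z_K + ℤ^𝒱) ∩ 𝒮'. -/

import Mathlib

/-!
Since the off-diagonal entries of `I` are nonnegative, `min (s, Z_K)` stays in the class of
`Z_K` and in `𝒮'` as soon as `Z_K` is anti-nef at every vertex where `Z_K < s`; then
`s ≤ min (s, Z_K) ≤ Z_K` by minimality. At a leg vertex `(Z_K, E_v) = 2 - b_v ≤ 0`, and at the
node `(Z_K, E_{v₀}) = 2 - b₀`. If `b₀ ≤ 1`, the cycle `Z_K - 2E_{v₀} - ∑ᵢ E_{v_{i1}}` lies in the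
class of `Z_K` and, because `d ≥ 3`, in `𝒮'`; so `s(v₀) ≤ Z_K(v₀) - 2` and the node never has
`Z_K < s`.
-/

open Matrix

/-- Negative (Hirzebruch) continued fraction `[b₁,…,b_k] = b₁ − 1/(b₂ − 1/(⋯))`
(with the convention `1/0 = 0`, so that `ncf [b] = b`). -/
def ncf : List ℚ → ℚ
  | [] => 0
  | b :: rest => b - 1 / ncf rest

section LipmanCone

variable {V : Type*}

def cycleClass (z : V → ℚ) : Set (V → ℚ) :=
  {x | ∀ v, ∃ k : ℤ, x v - z v = k}

theorem sub_intCast_mem_cycleClass (z : V → ℚ) (k : V → ℤ) :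
    z - (fun v => (k v : ℚ)) ∈ cycleClass z :=
  fun v => ⟨-k v, by simp⟩

theorem inf_mem_cycleClass {x z : V → ℚ} (hx : x ∈ cycleClass z) : x ⊓ z ∈ cycleClass z := by
  intro v
  obtain ⟨k, hk⟩ := hx v
  refine ⟨min k 0, ?_⟩
  rw [Pi.inf_apply, ← min_sub_sub_right, hk, sub_self]
  push_cast
  rfl

variable [Fintype V] [DecidableEq V]

def lipmanCone (I : Matrix V V ℚ) : Set (V → ℚ) :=
  {x | ∀ v, x ⬝ᵥ I *ᵥ Pi.single v 1 ≤ 0}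

theorem dotProduct_mulVec_single_one_eq_sum (I : Matrix V V ℚ) (x : V → ℚ) (v : V) :
    x ⬝ᵥ I *ᵥ Pi.single v 1 = ∑ u, x u * I u v := by
  rw [mulVec_single_one]; rfl

theorem dotProduct_mulVec_single_one_mono {I : Matrix V V ℚ} {v : V}
    (hoff : ∀ u, u ≠ v → 0 ≤ I u v) {x y : V → ℚ} (hxy : x ≤ y) (hv : x v = y v) :
    x ⬝ᵥ I *ᵥ Pi.single v 1 ≤ y ⬝ᵥ I *ᵥ Pi.single v 1 := by
  simp only [dotProduct_mulVec_single_one_eq_sum]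
  refine Finset.sum_le_sum fun u _ => ?_
  rcases eq_or_ne u v with rfl | huv
  · rw [hv]
  · exact mul_le_mul_of_nonneg_right (hxy u) (hoff u huv)

theorem inf_mem_lipmanCone {I : Matrix V V ℚ} (hoff : ∀ u v, u ≠ v → 0 ≤ I u v) {x z : V → ℚ}
    (hx : x ∈ lipmanCone I) (hz : ∀ v, z v < x v → z ⬝ᵥ I *ᵥ Pi.single v 1 ≤ 0) :
    x ⊓ z ∈ lipmanCone I := by
  intro v
  rcases le_or_gt (x v) (z v) with hle | hlt
  · exact (dotProduct_mulVec_single_one_mono (hoff · v) inf_le_left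
      (inf_eq_left.2 hle)).trans (hx v)
  · exact (dotProduct_mulVec_single_one_mono (hoff · v) inf_le_right
      (inf_eq_right.2 hlt.le)).trans (hz v hlt)

theorem IsLeast.le_of_dotProduct_mulVec_single_one_nonpos {I : Matrix V V ℚ}
    (hoff : ∀ u v, u ≠ v → 0 ≤ I u v) {s z : V → ℚ} (hs : IsLeast (cycleClass z ∩ lipmanCone I) s)
    (hz : ∀ v, z v < s v → z ⬝ᵥ I *ᵥ Pi.single v 1 ≤ 0) : s ≤ z :=
  (hs.2 ⟨inf_mem_cycleClass hs.1.1, inf_mem_lipmanCone hoff hs.1.2 hz⟩).trans inf_le_right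

end LipmanCone

section StarShaped

variable {d : ℕ} {ν : Fin d → ℕ}
  {I : Matrix (Option ((i : Fin d) × Fin (ν i))) (Option ((i : Fin d) × Fin (ν i))) ℚ}

theorem starPlumbing_offDiag_nonneg (hsym : I.IsSymm)
    (hI0leg : ∀ i (j : Fin (ν i)), I none (some ⟨i, j⟩) = if (j : ℕ) = 0 then 1 else 0)
    (hIleg : ∀ i (j j' : Fin (ν i)), j ≠ j' →
      I (some ⟨i, j⟩) (some ⟨i, j'⟩) =
        if (j : ℕ) + 1 = (j' : ℕ) ∨ (j' : ℕ) + 1 = (j : ℕ) then 1 else 0)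
    (hIcross : ∀ i i', i ≠ i' → ∀ (j : Fin (ν i)) (j' : Fin (ν i')),
      I (some ⟨i, j⟩) (some ⟨i', j'⟩) = 0) :
    ∀ u v, u ≠ v → 0 ≤ I u v
  | none, none, h => absurd rfl h
  | none, some ⟨i, j⟩, _ => by rw [hI0leg]; split <;> norm_num
  | some ⟨i, j⟩, none, _ => by rw [← hsym.apply, hI0leg]; split <;> norm_num
  | some ⟨i, j⟩, some ⟨i', j'⟩, h => by
    rcases eq_or_ne i i' with rfl | hi
    · rw [hIleg i j j' fun hj => h (by rw [hj])]; split <;> norm_num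
    · rw [hIcross i i' hi]

def centralCycle : Option ((i : Fin d) × Fin (ν i)) → ℤ
  | none => 2
  | some p => if (p.2 : ℕ) = 0 then 1 else 0

theorem centralCycle_dotProduct_mulVec_single_one (hν : ∀ i, 0 < ν i) (v) :
    (fun u => (centralCycle u : ℚ)) ⬝ᵥ I *ᵥ Pi.single v 1 =
      2 * I none v + ∑ i, I (some ⟨i, ⟨0, hν i⟩⟩) v := by
  rw [mulVec_single_one]
  simp only [dotProduct, col_apply, Fintype.sum_option, ← Finset.univ_sigma_univ, Finset.sum_sigma]
  congr 1
  refine Finset.sum_congr rfl fun i _ => ?_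
  rw [Finset.sum_eq_single (⟨0, hν i⟩ : Fin (ν i))]
  · simp [centralCycle]
  · intro j _ hj
    simp [centralCycle, Fin.ext_iff.not.mp hj]
  · simp

theorem sub_centralCycle_mem_lipmanCone {b₀ : ℤ} {b : (i : Fin d) → Fin (ν i) → ℤ}
    (hν : ∀ i, 0 < ν i) (hb : ∀ i j, 2 ≤ b i j) (hb₀ : b₀ + 2 ≤ d) (hsym : I.IsSymm)
    (hI00 : I none none = -(b₀ : ℚ))
    (hIdiag : ∀ i j, I (some ⟨i, j⟩) (some ⟨i, j⟩) = -((b i j : ℤ) : ℚ))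
    (hI0leg : ∀ i (j : Fin (ν i)), I none (some ⟨i, j⟩) = if (j : ℕ) = 0 then 1 else 0)
    (hIcross : ∀ i i', i ≠ i' → ∀ (j : Fin (ν i)) (j' : Fin (ν i')),
      I (some ⟨i, j⟩) (some ⟨i', j'⟩) = 0)
    (hoff : ∀ u v, u ≠ v → 0 ≤ I u v)
    {ZK : Option ((i : Fin d) × Fin (ν i)) → ℚ}
    (hZK : ∀ v, ZK ⬝ᵥ I *ᵥ Pi.single v 1 = I v v + 2) :
    ZK - (fun u => (centralCycle u : ℚ)) ∈ lipmanCone I := by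
  intro v
  rw [sub_dotProduct, hZK, centralCycle_dotProduct_mulVec_single_one hν]
  rcases v with _ | ⟨i, j⟩
  · have hleg : ∀ i, I (some ⟨i, ⟨0, hν i⟩⟩) none = 1 := fun i => by
      rw [← hsym.apply, hI0leg]; rfl
    have hb₀' : (b₀ : ℚ) + 2 ≤ d := by exact_mod_cast hb₀
    simp only [hleg, hI00, Finset.sum_const, Finset.card_univ, Fintype.card_fin, nsmul_eq_mul,
      mul_one]
    linarith
  · have hleg : ∑ i', I (some ⟨i', ⟨0, hν i'⟩⟩) (some ⟨i, j⟩) =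
        I (some ⟨i, ⟨0, hν i⟩⟩) (some ⟨i, j⟩) :=
      Finset.sum_eq_single i (fun i' _ hi' => hIcross i' i hi' _ _) (by simp)
    have hbij : (2 : ℚ) ≤ b i j := by exact_mod_cast hb i j
    rw [hleg, hIdiag, hI0leg]
    rcases eq_or_ne (j : ℕ) 0 with hj | hj
    · obtain rfl : j = ⟨0, hν i⟩ := Fin.ext hj
      simp only [if_true, hIdiag]
      linarith
    · have := hoff (some ⟨i, ⟨0, hν i⟩⟩) (some ⟨i, j⟩) (by simpa [Fin.ext_iff] using hj.symm)
      simp only [hj, if_false]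
      linarith

end StarShaped

theorem stmt_13_general
    (d : ℕ) (hd : 3 ≤ d) (b₀ : ℤ)
    -- the legs: negative continued fraction expansions αᵢ/ωᵢ = [b_{i1},…,b_{iνᵢ}]
    (ν : Fin d → ℕ) (hν : ∀ i, 0 < ν i)
    (b : (i : Fin d) → Fin (ν i) → ℤ) (hb : ∀ i j, 2 ≤ b i j)
    -- the intersection matrix of the star-shaped plumbing graph
    (I : Matrix (Option ((i : Fin d) × Fin (ν i))) (Option ((i : Fin d) × Fin (ν i))) ℚ)
    (hsym : I.IsSymm)
    (hI00 : I none none = -(b₀ : ℚ))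
    (hIdiag : ∀ i j, I (some ⟨i, j⟩) (some ⟨i, j⟩) = -((b i j : ℤ) : ℚ))
    (hI0leg : ∀ i (j : Fin (ν i)),
      I none (some ⟨i, j⟩) = if (j : ℕ) = 0 then 1 else 0)
    (hIleg : ∀ i (j j' : Fin (ν i)), j ≠ j' →
      I (some ⟨i, j⟩) (some ⟨i, j'⟩) =
        if (j : ℕ) + 1 = (j' : ℕ) ∨ (j' : ℕ) + 1 = (j : ℕ) then 1 else 0)
    (hIcross : ∀ i i', i ≠ i' → ∀ (j : Fin (ν i)) (j' : Fin (ν i')),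
      I (some ⟨i, j⟩) (some ⟨i', j'⟩) = 0)
    -- the anticanonical cycle
    (ZK : Option ((i : Fin d) × Fin (ν i)) → ℚ)
    (hZK : ∀ v, ZK ⬝ᵥ I.mulVec (Pi.single v 1) = I v v + 2)
    -- the minimal anti-nef cycle in the class of Z_K
    (s : Option ((i : Fin d) × Fin (ν i)) → ℚ)
    (hs : IsLeast {x | (∀ v, ∃ k : ℤ, x v - ZK v = (k : ℚ)) ∧
      ∀ v, x ⬝ᵥ I.mulVec (Pi.single v 1) ≤ 0} s) :
    s ≤ ZK := by
  have hoff := starPlumbing_offDiag_nonneg hsym hI0leg hIleg hIcross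
  refine IsLeast.le_of_dotProduct_mulVec_single_one_nonpos hoff hs fun v hv => ?_
  rw [hZK]
  rcases v with _ | ⟨i, j⟩
  · rcases le_or_gt 2 b₀ with hb₀ | hb₀
    · have : (2 : ℚ) ≤ b₀ := by exact_mod_cast hb₀
      rw [hI00]
      linarith
    · have hs_le := hs.2 ⟨sub_intCast_mem_cycleClass ZK centralCycle,
        sub_centralCycle_mem_lipmanCone hν hb (by omega) hsym hI00 hIdiag hI0leg hIcross hoff hZK⟩
      have := hs_le none
      simp only [Pi.sub_apply, centralCycle, Int.cast_ofNat] at this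
      linarith
  · have : (2 : ℚ) ≤ b i j := by exact_mod_cast hb i j
    rw [hIdiag]
    linarith

/-- For the star-shaped plumbing lattice of Seifert data, `Z_K ≥ s_{[Z_K]}`,
where `s_{[Z_K]}` is the unique minimal element of `(Z_K + ℤ^𝒱) ∩ 𝒮'`. -/
theorem stmt_13
    (d : ℕ) (hd : 3 ≤ d) (b₀ : ℤ)
    (α ω : Fin d → ℤ)
    (hω : ∀ i, 0 < ω i ∧ ω i < α i)
    (hcop : ∀ i, IsCoprime (α i) (ω i))
    (e : ℚ) (he : e = -(b₀ : ℚ) + ∑ i, (ω i : ℚ) / (α i : ℚ)) (heneg : e < 0)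
    -- the legs: negative continued fraction expansions αᵢ/ωᵢ = [b_{i1},…,b_{iνᵢ}]
    (ν : Fin d → ℕ) (hν : ∀ i, 0 < ν i)
    (b : (i : Fin d) → Fin (ν i) → ℤ) (hb : ∀ i j, 2 ≤ b i j)
    (hcf : ∀ i, ncf (List.ofFn fun j => ((b i j : ℤ) : ℚ)) = (α i : ℚ) / (ω i : ℚ))
    -- the intersection matrix of the star-shaped plumbing graph
    (I : Matrix (Option ((i : Fin d) × Fin (ν i))) (Option ((i : Fin d) × Fin (ν i))) ℚ)
    (hsym : I.IsSymm)
    (hI00 : I none none = -(b₀ : ℚ))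
    (hIdiag : ∀ i j, I (some ⟨i, j⟩) (some ⟨i, j⟩) = -((b i j : ℤ) : ℚ))
    (hI0leg : ∀ i (j : Fin (ν i)),
      I none (some ⟨i, j⟩) = if (j : ℕ) = 0 then 1 else 0)
    (hIleg : ∀ i (j j' : Fin (ν i)), j ≠ j' →
      I (some ⟨i, j⟩) (some ⟨i, j'⟩) =
        if (j : ℕ) + 1 = (j' : ℕ) ∨ (j' : ℕ) + 1 = (j : ℕ) then 1 else 0)
    (hIcross : ∀ i i', i ≠ i' → ∀ (j : Fin (ν i)) (j' : Fin (ν i')),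
      I (some ⟨i, j⟩) (some ⟨i', j'⟩) = 0)
    (hnegdef : ∀ x : Option ((i : Fin d) × Fin (ν i)) → ℚ, x ≠ 0 → x ⬝ᵥ I.mulVec x < 0)
    -- the anticanonical cycle
    (ZK : Option ((i : Fin d) × Fin (ν i)) → ℚ)
    (hZK : ∀ v, ZK ⬝ᵥ I.mulVec (Pi.single v 1) = I v v + 2)
    -- the minimal anti-nef cycle in the class of Z_K
    (s : Option ((i : Fin d) × Fin (ν i)) → ℚ)
    (hs : IsLeast {x | (∀ v, ∃ k : ℤ, x v - ZK v = (k : ℚ)) ∧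
      ∀ v, x ⬝ᵥ I.mulVec (Pi.single v 1) ≤ 0} s) :
    s ≤ ZK :=
  stmt_13_general d hd b₀ ν hν b hb I hsym hI00 hIdiag hI0leg hIleg hIcross ZK hZK s hs
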